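/- Let d ≥ 5 and define Ā(u,u′;v,v′) := ⟨u−u′⟩^{2−d} ⟨u−v′⟩^{4−2d} ⟨u′−v⟩^{2−d} for u, u′, v, v′ ∈ ℤ^d. Then there exist constants c₁, c₂ > 0, depending only on d, such that for every m ≥ 1 and all x, y ∈ ℤ^d: Σ_{x₁, x₁′, …, x_{m−1}, x_{m−1}′ ∈ ℤ^d} ∏_{j=0}^{m−1} Ā(x_j, x_j′; x_{j+1}, x_{j+1}′) ≤ c₁ c₂^m ⟨y−x⟩^{−3(d−2)}, where by convention x₀ := x₀′ := x and x_m := x_m′ := y (for m = 1 the sum is empty and the left-hand side equals Ā(x,x;y,y)). -/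

import Mathlib

open scoped BigOperators

/-- Euclidean norm of a point of `ℤ^d`. -/
noncomputable def znorm {d : ℕ} (x : Fin d → ℤ) : ℝ :=
  Real.sqrt (∑ i, ((x i : ℝ)) ^ 2)

/-- `⟨x⟩ = max(|x|, 1)`. -/
noncomputable def zbra {d : ℕ} (x : Fin d → ℤ) : ℝ := max (znorm x) 1

/-- `Ā(u,u′;v,v′) := ⟨u−u′⟩^{2−d} ⟨u−v′⟩^{4−2d} ⟨u′−v⟩^{2−d}`, with the two pairs of
arguments bundled as `p = (u, u′)` and `q = (v, v′)`. -/
noncomputable def Abar {d : ℕ} (p q : (Fin d → ℤ) × (Fin d → ℤ)) : ℝ :=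
  zbra (p.1 - p.2) ^ ((2 : ℝ) - d) * zbra (p.1 - q.2) ^ ((4 : ℝ) - 2 * d) *
    zbra (p.2 - q.1) ^ ((2 : ℝ) - d)

/-- The sequence `(x₀,x₀′) = (x,x)`, `(x_j,x_j′) = w(j−1)` for `1 ≤ j ≤ m−1`,
and `(x_m,x_m′) = (y,y)`. -/
noncomputable def laceVertices {d : ℕ} (x y : Fin d → ℤ) (m : ℕ)
    (w : Fin (m - 1) → ((Fin d → ℤ) × (Fin d → ℤ))) (j : ℕ) :
    (Fin d → ℤ) × (Fin d → ℤ) :=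
  if j = 0 then (x, x) else if h : j - 1 < m - 1 then w ⟨j - 1, h⟩ else (y, y)

/-!
Write `E(x) = ⟨x⟩^{-(d-2)}` (`decay (d - 2)`), so that `Ā(u,u′;v,v′) = E(u-u′) E(u-v′)² E(u′-v)`.
Since `⟨x + y⟩ ≤ 2 max(⟨x⟩, ⟨y⟩)`, a product `E(x) E(y)` may trade its larger factor for
`2^{d-2} E(x + y)`. Four such trades bound the summand of `∑_q Ā(p, q) Ā(q, (y,y))` by
`Ā(p, (y,y))` times a product of sums of translates of `E`, which sums over `q = (v, v′)` to a
multiple of the squared bubble `(∑_v E(v)²)²`; the bubble is finite because `2(d-2) > d`.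
So `Ā(·, (y,y))` is, up to a constant `C`, invariant under convolution with `Ā`, and the
`m`-step chain is at most `C^{m-1} Ā((x,x), (y,y)) = C^{m-1} ⟨y-x⟩^{-3(d-2)}`.
-/

open scoped ENNReal

section Lattice

/-- Realizing `ℤ^d` inside Euclidean space gives `znorm` its triangle inequality and its
`p`-series. -/
abbrev stdLattice (d : ℕ) : Submodule ℤ (EuclideanSpace ℝ (Fin d)) :=
  Submodule.span ℤ (Set.range (EuclideanSpace.basisFun (Fin d) ℝ).toBasis)

noncomputable def latticeEquiv (d : ℕ) : (Fin d → ℤ) ≃ₗ[ℤ] stdLattice d :=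
  ((EuclideanSpace.basisFun (Fin d) ℝ).toBasis.restrictScalars ℤ).equivFun.symm

variable {d : ℕ}

lemma latticeEquiv_apply_ofLp (x : Fin d → ℤ) (i : Fin d) :
    (latticeEquiv d x : EuclideanSpace ℝ (Fin d)) i = x i := by
  rw [latticeEquiv, Module.Basis.equivFun_symm_apply]
  simp only [Submodule.coe_sum, Submodule.coe_smul_of_tower, Module.Basis.restrictScalars_apply]
  simp [Finset.sum_apply, Pi.single_apply]

lemma finrank_stdLattice : Module.finrank ℤ (stdLattice d) = d := by
  simp [Module.finrank_eq_card_basis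
    ((EuclideanSpace.basisFun (Fin d) ℝ).toBasis.restrictScalars ℤ)]

lemma znorm_eq_norm_latticeEquiv (x : Fin d → ℤ) :
    znorm x = ‖(latticeEquiv d x : EuclideanSpace ℝ (Fin d))‖ := by
  simp [EuclideanSpace.norm_eq, znorm, latticeEquiv_apply_ofLp]

end Lattice

section Bracket

variable {d : ℕ}

lemma one_le_zbra (x : Fin d → ℤ) : 1 ≤ zbra x := le_max_right _ _

lemma zbra_pos (x : Fin d → ℤ) : 0 < zbra x := one_pos.trans_le (one_le_zbra x)

lemma zbra_zero : zbra (0 : Fin d → ℤ) = 1 := by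
  simp [zbra, znorm]

lemma zbra_neg (x : Fin d → ℤ) : zbra (-x) = zbra x := by
  simp only [zbra, znorm_eq_norm_latticeEquiv, map_neg, Submodule.coe_neg, norm_neg]

lemma zbra_sub_comm (x y : Fin d → ℤ) : zbra (x - y) = zbra (y - x) := by
  rw [← neg_sub, zbra_neg]

lemma znorm_add_le (x y : Fin d → ℤ) : znorm (x + y) ≤ znorm x + znorm y := by
  simp only [znorm_eq_norm_latticeEquiv, map_add, Submodule.coe_add]
  exact norm_add_le _ _

lemma zbra_add_le (x y : Fin d → ℤ) : zbra (x + y) ≤ zbra x + zbra y :=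
  max_le ((znorm_add_le x y).trans (add_le_add (le_max_left _ _) (le_max_left _ _)))
    ((one_le_zbra x).trans (le_add_of_nonneg_right (zbra_pos y).le))

lemma zbra_rpow_neg_le_of_le {s : ℝ} (hs : 0 ≤ s) {x y : Fin d → ℤ} (h : zbra y ≤ zbra x) :
    zbra x ^ (-s) ≤ 2 ^ s * zbra (x + y) ^ (-s) := by
  have h2 : zbra (x + y) ≤ 2 * zbra x := by linarith [zbra_add_le x y]
  calc zbra x ^ (-s) = 2 ^ s * (2 * zbra x) ^ (-s) := by
        rw [Real.mul_rpow zero_le_two (zbra_pos x).le, Real.rpow_neg zero_le_two,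
          mul_inv_cancel_left₀ (Real.rpow_pos_of_pos two_pos s).ne']
    _ ≤ 2 ^ s * zbra (x + y) ^ (-s) := mul_le_mul_of_nonneg_left
        (Real.rpow_le_rpow_of_nonpos (zbra_pos _) h2 (neg_nonpos.mpr hs)) (by positivity)

lemma summable_zbra_rpow_neg {r : ℝ} (hr : (d : ℝ) < r) :
    Summable fun x : Fin d → ℤ => zbra x ^ (-r) := by
  have hL : Summable fun z : stdLattice d => ‖z‖ ^ (-r) :=
    ZLattice.summable_norm_rpow _ (-r) (by rw [finrank_stdLattice]; linarith)
  have hZ : Summable fun x : Fin d → ℤ => znorm x ^ (-r) :=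
    ((latticeEquiv d).toEquiv.summable_iff.mpr hL).congr fun x => by
      rw [znorm_eq_norm_latticeEquiv]; rfl
  refine hZ.of_norm_bounded_eventually ?_
  filter_upwards [Filter.eventually_cofinite_ne 0] with x hx
  have hpos : 0 < znorm x := by
    rw [znorm_eq_norm_latticeEquiv, norm_pos_iff]
    simpa using hx
  rw [Real.norm_of_nonneg (Real.rpow_nonneg (zbra_pos x).le _)]
  exact Real.rpow_le_rpow_of_nonpos hpos (le_max_left _ _) (by linarith)

end Bracket

section Decay

variable {d : ℕ} {s : ℝ}

/-- Valued in `ℝ≥0∞` so that lattice sums need no summability side conditions. -/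
noncomputable def decay (s : ℝ) (x : Fin d → ℤ) : ℝ≥0∞ := ENNReal.ofReal (zbra x ^ (-s))

lemma decay_zero : decay s (0 : Fin d → ℤ) = 1 := by
  simp [decay, zbra_zero]

lemma decay_sub_comm (x y : Fin d → ℤ) : decay s (x - y) = decay s (y - x) := by
  rw [decay, decay, zbra_sub_comm]

/-- Of two steps `x`, `y`, the longer one is at least half of `x + y`. -/
lemma decay_mul_decay_le (hs : 0 ≤ s) (x y : Fin d → ℤ) :
    decay s x * decay s y ≤ ENNReal.ofReal (2 ^ s) * decay s (x + y) * (decay s x + decay s y) := by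
  have key : ∀ x y : Fin d → ℤ, zbra y ≤ zbra x →
      decay s x ≤ ENNReal.ofReal (2 ^ s) * decay s (x + y) := fun x y h => by
    rw [decay, decay, ← ENNReal.ofReal_mul (by positivity)]
    exact ENNReal.ofReal_le_ofReal (zbra_rpow_neg_le_of_le hs h)
  rcases le_total (zbra y) (zbra x) with h | h
  · calc decay s x * decay s y ≤ ENNReal.ofReal (2 ^ s) * decay s (x + y) * decay s y := by
          gcongr; exact key x y h
      _ ≤ _ := by gcongr; exact le_add_self
  · calc decay s x * decay s y ≤ decay s x * (ENNReal.ofReal (2 ^ s) * decay s (x + y)) := by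
          gcongr; rw [add_comm]; exact key y x h
      _ ≤ _ := by rw [mul_comm]; gcongr; exact le_self_add

lemma decay_sub_mul_decay_sub_le (hs : 0 ≤ s) (a b c : Fin d → ℤ) :
    decay s (b - a) * decay s (b - c) ≤
      ENNReal.ofReal (2 ^ s) * decay s (a - c) * (decay s (b - a) + decay s (b - c)) := by
  rw [decay_sub_comm b a]
  simpa only [sub_add_sub_cancel] using decay_mul_decay_le hs (a - b) (b - c)

noncomputable def bubble (s : ℝ) (d : ℕ) : ℝ≥0∞ := ∑' v : Fin d → ℤ, decay s v ^ 2

lemma one_le_bubble : 1 ≤ bubble s d := by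
  calc 1 = decay s (0 : Fin d → ℤ) ^ 2 := by rw [decay_zero, one_pow]
    _ ≤ bubble s d := ENNReal.le_tsum 0

lemma bubble_ne_top (hds : (d : ℝ) < 2 * s) : bubble s d ≠ ⊤ := by
  have hsq : ∀ v : Fin d → ℤ, decay s v ^ 2 = ENNReal.ofReal (zbra v ^ (-(2 * s))) := fun v => by
    rw [decay, ← ENNReal.ofReal_pow (Real.rpow_nonneg (zbra_pos v).le _), ← Real.rpow_natCast,
      ← Real.rpow_mul (zbra_pos v).le]
    ring_nf
  rw [bubble, tsum_congr hsq, ← ENNReal.ofReal_tsum_of_nonneg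
    (fun v => Real.rpow_nonneg (zbra_pos v).le _) (summable_zbra_rpow_neg hds)]
  exact ENNReal.ofReal_ne_top

lemma tsum_decay_mul_decay_le (a b : Fin d → ℤ) :
    ∑' v, decay s (v - a) * decay s (v - b) ≤ 2 * bubble s d := by
  have hsq : ∀ v, decay s (v - a) * decay s (v - b) ≤ decay s (v - a) ^ 2 + decay s (v - b) ^ 2 :=
    fun v => by
      rcases le_total (decay s (v - a)) (decay s (v - b)) with h | h
      · calc _ ≤ decay s (v - b) ^ 2 := by rw [sq]; gcongr
          _ ≤ _ := le_add_self
      · calc _ ≤ decay s (v - a) ^ 2 := by rw [sq]; gcongr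
          _ ≤ _ := le_self_add
  calc ∑' v, decay s (v - a) * decay s (v - b)
      ≤ ∑' v, decay s (v - a) ^ 2 + ∑' v, decay s (v - b) ^ 2 := by
        rw [← ENNReal.tsum_add]; exact ENNReal.tsum_le_tsum hsq
    _ = bubble s d + bubble s d := congrArg₂ (· + ·)
        ((Equiv.subRight a).tsum_eq fun v => decay s v ^ 2)
        ((Equiv.subRight b).tsum_eq fun v => decay s v ^ 2)
    _ = 2 * bubble s d := (two_mul _).symm

lemma tsum_add_mul_add_le (a b c e : Fin d → ℤ) :
    ∑' v, (decay s (v - a) + decay s (v - b)) * (decay s (v - c) + decay s (v - e)) ≤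
      8 * bubble s d := by
  simp only [add_mul, mul_add, ENNReal.tsum_add]
  calc _ ≤ 2 * bubble s d + 2 * bubble s d + (2 * bubble s d + 2 * bubble s d) := by
        gcongr <;> exact tsum_decay_mul_decay_le _ _
    _ = 8 * bubble s d := by ring

end Decay

section LaceKernel

variable {d : ℕ} {s : ℝ}

noncomputable def laceKernel (s : ℝ) (p q : (Fin d → ℤ) × (Fin d → ℤ)) : ℝ≥0∞ :=
  decay s (p.1 - p.2) * decay s (p.1 - q.2) ^ 2 * decay s (p.2 - q.1)

lemma ofReal_Abar (p q : (Fin d → ℤ) × (Fin d → ℤ)) :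
    ENNReal.ofReal (Abar p q) = laceKernel ((d : ℝ) - 2) p q := by
  have hpos := fun x : Fin d → ℤ => (zbra_pos x).le
  rw [Abar, laceKernel, decay, decay, decay, ← ENNReal.ofReal_pow (Real.rpow_nonneg (hpos _) _),
    ← ENNReal.ofReal_mul (Real.rpow_nonneg (hpos _) _),
    ← ENNReal.ofReal_mul (mul_nonneg (Real.rpow_nonneg (hpos _) _) (by positivity)),
    ← Real.rpow_natCast, ← Real.rpow_mul (hpos _)]
  congr 4 <;> push_cast <;> ring

lemma laceKernel_mul_laceKernel_le (hs : 0 ≤ s) (u u' v v' y : Fin d → ℤ) :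
    laceKernel s (u, u') (v, v') * laceKernel s (v, v') (y, y) ≤
      ENNReal.ofReal (2 ^ s) ^ 4 * laceKernel s (u, u') (y, y) *
        ((decay s (v - u') + decay s (v - y)) * (decay s (v - u) + decay s (v - y)) *
          ((decay s (v' - u) + decay s (v' - y)) * (decay s (v' - v) + decay s (v' - u)))) := by
  set K := ENNReal.ofReal (2 ^ s)
  have h₁ := decay_sub_mul_decay_sub_le hs u v' y
  have h₂ := decay_sub_mul_decay_sub_le hs u' v y
  have h₃ := decay_sub_mul_decay_sub_le hs v v' u
  have h₄ := decay_sub_mul_decay_sub_le hs u v y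
  simp only [laceKernel]
  rw [decay_sub_comm u v', decay_sub_comm u' v, decay_sub_comm v v']
  calc _ = decay s (u - u') * (decay s (v' - u) * decay s (v' - y)) *
        (decay s (v - u') * decay s (v - y)) * (decay s (v' - v) * decay s (v' - u)) *
          decay s (v - y) := by ring
    _ ≤ decay s (u - u') * (K * decay s (u - y) * (decay s (v' - u) + decay s (v' - y))) *
        (K * decay s (u' - y) * (decay s (v - u') + decay s (v - y))) *
          (K * decay s (v - u) * (decay s (v' - v) + decay s (v' - u))) * decay s (v - y) := by
        gcongr
    _ = K ^ 3 * decay s (u - u') * decay s (u - y) * decay s (u' - y) *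
        (decay s (v' - u) + decay s (v' - y)) * (decay s (v - u') + decay s (v - y)) *
          (decay s (v' - v) + decay s (v' - u)) * (decay s (v - u) * decay s (v - y)) := by ring
    _ ≤ K ^ 3 * decay s (u - u') * decay s (u - y) * decay s (u' - y) *
        (decay s (v' - u) + decay s (v' - y)) * (decay s (v - u') + decay s (v - y)) *
          (decay s (v' - v) + decay s (v' - u)) *
            (K * decay s (u - y) * (decay s (v - u) + decay s (v - y))) := by gcongr
    _ = _ := by ring

lemma tsum_laceKernel_mul_laceKernel_le (hs : 0 ≤ s) (p : (Fin d → ℤ) × (Fin d → ℤ))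
    (y : Fin d → ℤ) :
    ∑' q, laceKernel s p q * laceKernel s q (y, y) ≤
      ENNReal.ofReal (2 ^ s) ^ 4 * (8 * bubble s d) ^ 2 * laceKernel s p (y, y) := by
  obtain ⟨u, u'⟩ := p
  set L := ENNReal.ofReal (2 ^ s) ^ 4 * laceKernel s (u, u') (y, y)
  calc ∑' q, laceKernel s (u, u') q * laceKernel s q (y, y)
      ≤ ∑' q : (Fin d → ℤ) × (Fin d → ℤ), L *
        ((decay s (q.1 - u') + decay s (q.1 - y)) * (decay s (q.1 - u) + decay s (q.1 - y)) *
          ((decay s (q.2 - u) + decay s (q.2 - y)) * (decay s (q.2 - q.1) + decay s (q.2 - u)))) :=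
        ENNReal.tsum_le_tsum fun q => laceKernel_mul_laceKernel_le hs u u' q.1 q.2 y
    _ = L * ∑' v, (decay s (v - u') + decay s (v - y)) * (decay s (v - u) + decay s (v - y)) *
          ∑' v', (decay s (v' - u) + decay s (v' - y)) * (decay s (v' - v) + decay s (v' - u)) := by
        simp only [ENNReal.tsum_mul_left, ENNReal.tsum_prod']
    _ ≤ L * ∑' v, (decay s (v - u') + decay s (v - y)) * (decay s (v - u) + decay s (v - y)) *
          (8 * bubble s d) := by
        gcongr with v
        exact tsum_add_mul_add_le _ _ _ _
    _ ≤ L * ((8 * bubble s d) * (8 * bubble s d)) := by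
        rw [ENNReal.tsum_mul_right]
        gcongr
        exact tsum_add_mul_add_le _ _ _ _
    _ = _ := by ring

end LaceKernel

section Chain

variable {α : Type*}

/-- `laceVertices x y (n + 1)` is `chainVertices (x, x) (y, y) n` by definition. -/
def chainVertices (p r : α) (n : ℕ) (w : Fin n → α) (j : ℕ) : α :=
  if j = 0 then p else if h : j - 1 < n then w ⟨j - 1, h⟩ else r

noncomputable def chainSum (k : α → α → ℝ≥0∞) (n : ℕ) (p r : α) : ℝ≥0∞ :=
  ∑' w : Fin n → α, ∏ j ∈ Finset.range (n + 1),
    k (chainVertices p r n w j) (chainVertices p r n w (j + 1))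

lemma chainVertices_zero (p r : α) (n : ℕ) (w : Fin n → α) : chainVertices p r n w 0 = p := rfl

lemma chainVertices_cons_succ (p r q : α) (n : ℕ) (w : Fin n → α) (j : ℕ) :
    chainVertices p r (n + 1) (Fin.cons q w) (j + 1) = chainVertices q r n w j := by
  rcases j with _ | j
  · rfl
  · simp only [chainVertices, Nat.add_one_ne_zero, if_false, Nat.add_sub_cancel]
    by_cases h : j < n
    · rw [dif_pos (by omega), dif_pos h]
      exact Fin.cons_succ (α := fun _ => α) q w ⟨j, h⟩
    · rw [dif_neg (by omega), dif_neg h]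

variable {k : α → α → ℝ≥0∞}

lemma chainSum_zero (p r : α) : chainSum k 0 p r = k p r := by
  simp [chainSum, chainVertices]

lemma chainSum_succ (n : ℕ) (p r : α) :
    chainSum k (n + 1) p r = ∑' q, k p q * chainSum k n q r := by
  rw [chainSum, ← (Fin.consEquiv fun _ : Fin (n + 1) => α).tsum_eq, ENNReal.tsum_prod']
  refine tsum_congr fun q => ?_
  rw [chainSum, ← ENNReal.tsum_mul_left]
  refine tsum_congr fun w => ?_
  rw [show (Fin.consEquiv fun _ => α) (q, w) = Fin.cons q w from rfl, Finset.prod_range_succ',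
    mul_comm]
  simp only [chainVertices_cons_succ, chainVertices_zero]

lemma chainSum_le_pow {r : α} {C : ℝ≥0∞} (h : ∀ p, ∑' q, k p q * k q r ≤ C * k p r) (n : ℕ)
    (p : α) : chainSum k n p r ≤ C ^ n * k p r := by
  induction n generalizing p with
  | zero => rw [chainSum_zero, pow_zero, one_mul]
  | succ n ih =>
    calc chainSum k (n + 1) p r ≤ ∑' q, k p q * (C ^ n * k q r) := by
          rw [chainSum_succ]; gcongr with q; exact ih q
      _ = C ^ n * ∑' q, k p q * k q r := by
          rw [← ENNReal.tsum_mul_left]; exact tsum_congr fun q => by ring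
      _ ≤ C ^ (n + 1) * k p r := by
          rw [pow_succ, mul_assoc]; gcongr; exact h p

end Chain

lemma summable_and_tsum_le_of_tsum_ofReal_le {β : Type*} {f : β → ℝ} (hf : ∀ b, 0 ≤ f b)
    {B : ℝ} (hB : 0 ≤ B) (h : ∑' b, ENNReal.ofReal (f b) ≤ ENNReal.ofReal B) :
    Summable f ∧ ∑' b, f b ≤ B := by
  have hsum : Summable f := by
    simpa only [ENNReal.toReal_ofReal (hf _)] using
      ENNReal.summable_toReal (ne_top_of_le_ne_top ENNReal.ofReal_ne_top h)
  refine ⟨hsum, ?_⟩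
  rwa [← ENNReal.ofReal_le_ofReal_iff hB, ENNReal.ofReal_tsum_of_nonneg hf hsum]

section Abar

variable {d : ℕ}

lemma Abar_nonneg (p q : (Fin d → ℤ) × (Fin d → ℤ)) : 0 ≤ Abar p q :=
  mul_nonneg (mul_nonneg (Real.rpow_nonneg (zbra_pos _).le _)
    (Real.rpow_nonneg (zbra_pos _).le _)) (Real.rpow_nonneg (zbra_pos _).le _)

lemma Abar_diag (x y : Fin d → ℤ) :
    Abar (x, x) (y, y) = zbra (y - x) ^ (-(3 : ℝ) * ((d : ℝ) - 2)) := by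
  simp only [Abar, sub_self, zbra_zero, Real.one_rpow, one_mul]
  rw [zbra_sub_comm x y, ← Real.rpow_add (zbra_pos _)]
  ring_nf

lemma exists_tsum_laceKernel_mul_laceKernel_le (hd : 5 ≤ d) :
    ∃ C : ℝ≥0∞, 1 ≤ C ∧ C ≠ ⊤ ∧ ∀ (p : (Fin d → ℤ) × (Fin d → ℤ)) y,
      ∑' q, laceKernel ((d : ℝ) - 2) p q * laceKernel ((d : ℝ) - 2) q (y, y) ≤
        C * laceKernel ((d : ℝ) - 2) p (y, y) := by
  have hd' : (5 : ℝ) ≤ d := by exact_mod_cast hd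
  have hs : (0 : ℝ) ≤ (d : ℝ) - 2 := by linarith
  refine ⟨_, ?_, ?_, tsum_laceKernel_mul_laceKernel_le hs⟩
  · refine one_le_mul_of_one_le_of_one_le (one_le_pow₀ ?_) (one_le_pow₀ ?_)
    · exact ENNReal.one_le_ofReal.mpr (Real.one_le_rpow one_le_two hs)
    · exact one_le_mul_of_one_le_of_one_le (by norm_num) one_le_bubble
  · refine ENNReal.mul_ne_top (ENNReal.pow_ne_top ENNReal.ofReal_ne_top)
      (ENNReal.pow_ne_top (ENNReal.mul_ne_top (by norm_num) (bubble_ne_top ?_)))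
    linarith

end Abar

/-- Diagrammatic estimate: there exist `c₁, c₂ > 0` depending only on
`d ≥ 5` such that for all `m ≥ 1` and all `x, y ∈ ℤ^d`,
`Σ_{x₁,x₁′,…,x_{m−1},x_{m−1}′} ∏_{j=0}^{m−1} Ā(x_j,x_j′;x_{j+1},x_{j+1}′)
  ≤ c₁ c₂^m ⟨y−x⟩^{−3(d−2)}` (with `x₀ = x₀′ = x`, `x_m = x_m′ = y`). -/
theorem stmt_13 (d : ℕ) (hd : 5 ≤ d) :
    ∃ c₁ > (0 : ℝ), ∃ c₂ > (0 : ℝ), ∀ m : ℕ, 1 ≤ m → ∀ x y : Fin d → ℤ,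
      Summable (fun w : Fin (m - 1) → ((Fin d → ℤ) × (Fin d → ℤ)) =>
        ∏ j ∈ Finset.range m,
          Abar (laceVertices x y m w j) (laceVertices x y m w (j + 1))) ∧
      (∑' w : Fin (m - 1) → ((Fin d → ℤ) × (Fin d → ℤ)),
        ∏ j ∈ Finset.range m,
          Abar (laceVertices x y m w j) (laceVertices x y m w (j + 1)))
        ≤ c₁ * c₂ ^ m * zbra (y - x) ^ (-(3 : ℝ) * ((d : ℝ) - 2)) := by
  obtain ⟨C, hC_one, hC_top, hC⟩ := exists_tsum_laceKernel_mul_laceKernel_le hd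
  refine ⟨1, one_pos, C.toReal, ENNReal.toReal_pos (one_pos.trans_le hC_one).ne' hC_top,
    fun m hm x y => ?_⟩
  obtain ⟨n, rfl⟩ : ∃ n, m = n + 1 := ⟨m - 1, by omega⟩
  refine summable_and_tsum_le_of_tsum_ofReal_le
    (fun w => Finset.prod_nonneg fun j _ => Abar_nonneg _ _)
    (mul_nonneg (by positivity) (Real.rpow_nonneg (zbra_pos _).le _)) ?_
  calc ∑' w : Fin n → (Fin d → ℤ) × (Fin d → ℤ), ENNReal.ofReal (∏ j ∈ Finset.range (n + 1),
          Abar (laceVertices x y (n + 1) w j) (laceVertices x y (n + 1) w (j + 1)))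
      = chainSum (laceKernel ((d : ℝ) - 2)) n (x, x) (y, y) := by
        simp only [ENNReal.ofReal_prod_of_nonneg fun j _ => Abar_nonneg _ _, ofReal_Abar]
        rfl
    _ ≤ C ^ n * laceKernel ((d : ℝ) - 2) (x, x) (y, y) := chainSum_le_pow (hC · y) n _
    _ ≤ C ^ (n + 1) * ENNReal.ofReal (Abar (x, x) (y, y)) := by
        rw [ofReal_Abar]
        gcongr
        exact n.le_succ
    _ = ENNReal.ofReal (1 * C.toReal ^ (n + 1) * zbra (y - x) ^ (-(3 : ℝ) * ((d : ℝ) - 2))) := by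
        rw [Abar_diag, one_mul, ENNReal.ofReal_mul (by positivity), ENNReal.ofReal_pow
          ENNReal.toReal_nonneg, ENNReal.ofReal_toReal hC_top]
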